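/- arXiv:1709.08826 — 4 statements merged into one kernel-verified Lean document; each statement's English description precedes it below -/
import Mathlib

section
/- Monotonicity of the composed Kalman filter recursion: if Σ_{t|t} ⪯ Σ'_{t|t} are positive definite, then one full step of the Kalman recursion preserves the order, i.e., Σ_{t+1|t+1} = ((A·Σ_{t|t}·Aᵀ + W)⁻¹ + CᵀV⁻¹C)⁻¹ ⪯ Σ'_{t+1|t+1} = ((A·Σ'_{t|t}·Aᵀ + W)⁻¹ + CᵀV⁻¹C)⁻¹. -/
/-!
The prediction `Σ ↦ A Σ Aᵀ + W` is monotone in the Loewner order (a congruence followed by a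
translation), and the update `P ↦ (P⁻¹ + Cᵀ V⁻¹ C)⁻¹` is monotone because it is a translation
between two inversions, and inversion reverses the Loewner order on positive definite matrices.
-/

open Matrix

namespace Matrix.PosDef

variable {n 𝕜 : Type*} [Fintype n] [DecidableEq n] [Field 𝕜] [PartialOrder 𝕜] [StarRing 𝕜]
  [StarOrderedRing 𝕜]

/- The Schur complements of `fromBlocks B 1 1 A⁻¹` with respect to its two diagonal blocks are
`A⁻¹ - B⁻¹` and `B - A`, so each is positive semidefinite iff the block matrix is. -/
theorem posSemidef_inv_sub_inv {A B : Matrix n n 𝕜} (hA : A.PosDef) (hAB : (B - A).PosSemidef) :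
    (A⁻¹ - B⁻¹).PosSemidef := by
  have hB : B.PosDef := by simpa using hA.add_posSemidef hAB
  let _ := hA.isUnit.invertible
  let _ := hB.isUnit.invertible
  have h₁₁ := PosDef.fromBlocks₁₁ (1 : Matrix n n 𝕜) A⁻¹ hB
  have h₂₂ := PosDef.fromBlocks₂₂ B (1 : Matrix n n 𝕜) hA.inv
  simp only [conjTranspose_one, Matrix.one_mul, Matrix.mul_one, inv_inv_of_invertible] at h₁₁ h₂₂
  exact h₁₁.1 (h₂₂.2 hAB)

theorem posSemidef_inv_inv_add_sub_inv_inv_add {P P' K : Matrix n n 𝕜} (hP : P.PosDef)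
    (hPP' : (P' - P).PosSemidef) (hK : K.PosSemidef) :
    ((P'⁻¹ + K)⁻¹ - (P⁻¹ + K)⁻¹).PosSemidef := by
  have hP' : P'.PosDef := by simpa using hP.add_posSemidef hPP'
  refine posSemidef_inv_sub_inv (hP'.inv.add_posSemidef hK) ?_
  simpa only [add_sub_add_right_eq_sub] using posSemidef_inv_sub_inv hP hPP'

end Matrix.PosDef

theorem kalman_step_monotone_general {n p : ℕ}
    (Sig Sig' A W : Matrix (Fin n) (Fin n) ℝ)
    (C : Matrix (Fin p) (Fin n) ℝ) (V : Matrix (Fin p) (Fin p) ℝ)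
    (hSig : Sig.PosDef) (hW : W.PosDef) (hV : V.PosDef)
    (hle : (Sig' - Sig).PosSemidef) :
    (((A * Sig' * Aᵀ + W)⁻¹ + Cᵀ * V⁻¹ * C)⁻¹
      - ((A * Sig * Aᵀ + W)⁻¹ + Cᵀ * V⁻¹ * C)⁻¹).PosSemidef := by
  have hP : (A * Sig * Aᵀ + W).PosDef := by
    simpa using PosDef.posSemidef_add (hSig.posSemidef.mul_mul_conjTranspose_same A) hW
  have hPP' : ((A * Sig' * Aᵀ + W) - (A * Sig * Aᵀ + W)).PosSemidef := by
    simpa [Matrix.mul_sub, Matrix.sub_mul] using hle.mul_mul_conjTranspose_same A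
  have hK : (Cᵀ * V⁻¹ * C).PosSemidef := by
    simpa using hV.inv.posSemidef.conjTranspose_mul_mul_same C
  exact hP.posSemidef_inv_inv_add_sub_inv_inv_add hPP' hK

theorem kalman_step_monotone {n p : ℕ}
    (Sig Sig' A W : Matrix (Fin n) (Fin n) ℝ)
    (C : Matrix (Fin p) (Fin n) ℝ) (V : Matrix (Fin p) (Fin p) ℝ)
    (hSig : Sig.PosDef) (hSig' : Sig'.PosDef) (hW : W.PosDef) (hV : V.PosDef)
    (hle : (Sig' - Sig).PosSemidef) :
    (((A * Sig' * Aᵀ + W)⁻¹ + Cᵀ * V⁻¹ * C)⁻¹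
      - ((A * Sig * Aᵀ + W)⁻¹ + Cᵀ * V⁻¹ * C)⁻¹).PosSemidef :=
  kalman_step_monotone_general Sig Sig' A W C V hSig hW hV hle
end

section
/- Monotonicity (nonincreasingness) of the LQG sensor-selection cost: for sensor sets S1 ⊆ S2 ⊆ V, it holds that Σ_{t=1}^{T} tr(Θ_t · Σ_{t|t}(S1)) ≥ Σ_{t=1}^{T} tr(Θ_t · Σ_{t|t}(S2)), where Σ_{t|t}(S) are the Kalman filter error covariances computed with sensor set S and Θ_t are positive semidefinite weight matrices. -/
/-!
Work in the Loewner order. Enlarging the sensor set adds a positive semidefinite term to the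
information matrix `Σ_{t|t-1}⁻¹ + ∑ CᵀV⁻¹C`, and matrix inversion is antitone on positive definite
matrices, so a measurement update preserves `Σ(S₂) ≤ Σ(S₁)`; the prediction `A Σ Aᵀ + W` is a
monotone congruence, so the ordering propagates by induction on `t`. Finally `X ↦ tr (Θ X)` is
monotone for positive semidefinite `Θ`.
-/

open scoped MatrixOrder ComplexOrder

namespace Matrix

variable {n 𝕜 : Type*} [Fintype n] [DecidableEq n] [RCLike 𝕜]

/-- With `E = Y - X`, both `Y⁻¹ E X⁻¹` and `X⁻¹ E Y⁻¹` equal `X⁻¹ - Y⁻¹`, hence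
`X⁻¹ - Y⁻¹ = Y⁻¹ E Y⁻¹ + (Y⁻¹ E) X⁻¹ (E Y⁻¹)`, a sum of congruences of positive matrices. -/
theorem PosDef.inv_anti {X Y : Matrix n n 𝕜} (hX : X.PosDef) (hXY : X ≤ Y) : Y⁻¹ ≤ X⁻¹ := by
  have hY : Y.PosDef := by simpa using hX.add_posSemidef hXY
  have hXu := (isUnit_iff_isUnit_det X).mp hX.isUnit
  have hYu := (isUnit_iff_isUnit_det Y).mp hY.isUnit
  set E := Y - X
  have hE : 0 ≤ E := sub_nonneg.mpr hXY
  have hYi : star Y⁻¹ = Y⁻¹ := hY.inv.isHermitian.eq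
  have hleft : Y⁻¹ * E * X⁻¹ = X⁻¹ - Y⁻¹ := by
    rw [mul_sub, sub_mul, nonsing_inv_mul _ hYu, one_mul, mul_assoc, mul_nonsing_inv _ hXu,
      mul_one]
  have hright : X⁻¹ * E * Y⁻¹ = X⁻¹ - Y⁻¹ := by
    rw [mul_sub, sub_mul, nonsing_inv_mul _ hXu, one_mul, mul_assoc, mul_nonsing_inv _ hYu,
      mul_one]
  have hsplit : X⁻¹ - Y⁻¹ = Y⁻¹ * E * star Y⁻¹ + (Y⁻¹ * E) * X⁻¹ * star (Y⁻¹ * E) := by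
    rw [star_mul, hYi, (IsSelfAdjoint.of_nonneg hE).star_eq, ← mul_assoc, hleft, ← add_mul,
      ← add_mul, add_sub_cancel, hright]
  rw [← sub_nonneg, hsplit]
  exact add_nonneg (star_right_conjugate_nonneg hE _)
    (star_right_conjugate_nonneg hX.inv.posSemidef.nonneg _)

theorem PosSemidef.trace_mul_nonneg {A B : Matrix n n 𝕜} (hA : A.PosSemidef) (hB : B.PosSemidef) :
    0 ≤ (A * B).trace := by
  obtain ⟨R, rfl⟩ := CStarAlgebra.nonneg_iff_eq_star_mul_self.mp hA.nonneg
  rw [mul_assoc, trace_mul_comm]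
  exact (hB.mul_mul_conjTranspose_same R).trace_nonneg

theorem PosSemidef.trace_mul_mono {Θ A B : Matrix n n 𝕜} (hΘ : Θ.PosSemidef) (hAB : A ≤ B) :
    (Θ * A).trace ≤ (Θ * B).trace := by
  rw [← sub_nonneg, ← trace_sub, ← mul_sub]
  exact hΘ.trace_mul_nonneg hAB

theorem PosDef.inv_add_inv {P J : Matrix n n 𝕜} (hP : P.PosDef) (hJ : 0 ≤ J) :
    (P⁻¹ + J).PosDef :=
  hP.inv.add_posSemidef (nonneg_iff_posSemidef.mp hJ)

theorem PosDef.inv_inv_add_le_inv_inv_add {P₁ P₂ J₁ J₂ : Matrix n n 𝕜} (hP₂ : P₂.PosDef)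
    (hP : P₂ ≤ P₁) (hJ₁ : 0 ≤ J₁) (hJ : J₁ ≤ J₂) : (P₂⁻¹ + J₂)⁻¹ ≤ (P₁⁻¹ + J₁)⁻¹ := by
  have hP₁ : P₁.PosDef := by simpa using hP₂.add_posSemidef hP
  exact (hP₁.inv_add_inv hJ₁).inv_anti (add_le_add (hP₂.inv_anti hP) hJ)

end Matrix

open Matrix

theorem lqg_cost_monotone_general {n : ℕ} {ι : Type*}
    {p : ι → ℕ} (T : ℕ)
    (A W : ℕ → Matrix (Fin n) (Fin n) ℝ)
    (Sig10 : Matrix (Fin n) (Fin n) ℝ)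
    (C : ∀ i : ι, ℕ → Matrix (Fin (p i)) (Fin n) ℝ)
    (V : ∀ i : ι, ℕ → Matrix (Fin (p i)) (Fin (p i)) ℝ)
    (Θ : ℕ → Matrix (Fin n) (Fin n) ℝ)
    (Sf Sp : Finset ι → ℕ → Matrix (Fin n) (Fin n) ℝ)
    (hSig10 : Sig10.PosDef) (hW : ∀ t, (W t).PosDef)
    (hV : ∀ i t, (V i t).PosDef)
    (hΘ : ∀ t, (Θ t).PosSemidef)
    (hinit : ∀ S : Finset ι, Sp S 0 = Sig10)
    (hupd : ∀ (S : Finset ι) (t : ℕ),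
      Sf S t = ((Sp S t)⁻¹ + ∑ i ∈ S, (C i t)ᵀ * (V i t)⁻¹ * C i t)⁻¹)
    (hpred : ∀ (S : Finset ι) (t : ℕ),
      Sp S (t + 1) = A t * Sf S t * (A t)ᵀ + W t)
    (S1 S2 : Finset ι) (hsub : S1 ⊆ S2) :
    ∑ t ∈ Finset.range T, (Θ t * Sf S2 t).trace ≤
      ∑ t ∈ Finset.range T, (Θ t * Sf S1 t).trace := by
  have hinfo : ∀ i t, 0 ≤ (C i t)ᵀ * (V i t)⁻¹ * C i t := fun i t => by
    rw [← conjTranspose_eq_transpose_of_trivial, nonneg_iff_posSemidef]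
    exact (hV i t).inv.posSemidef.conjTranspose_mul_mul_same (C i t)
  have hJ : ∀ S t, 0 ≤ ∑ i ∈ S, (C i t)ᵀ * (V i t)⁻¹ * C i t :=
    fun S t => Finset.sum_nonneg fun i _ => hinfo i t
  have hfiltered : ∀ t, (Sp S2 t).PosDef → Sp S2 t ≤ Sp S1 t →
      (Sf S2 t).PosDef ∧ Sf S2 t ≤ Sf S1 t := by
    intro t hpos hle
    rw [hupd, hupd]
    exact ⟨(hpos.inv_add_inv (hJ S2 t)).inv, hpos.inv_inv_add_le_inv_inv_add hle (hJ S1 t)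
      (Finset.sum_le_sum_of_subset_of_nonneg hsub fun i _ _ => hinfo i t)⟩
  have hpredicted : ∀ t, (Sp S2 t).PosDef ∧ Sp S2 t ≤ Sp S1 t := by
    intro t
    induction t with
    | zero => rw [hinit, hinit]; exact ⟨hSig10, le_rfl⟩
    | succ t ih =>
      obtain ⟨hpos, hle⟩ := hfiltered t ih.1 ih.2
      rw [hpred, hpred, ← conjTranspose_eq_transpose_of_trivial]
      exact ⟨PosDef.posSemidef_add (hpos.posSemidef.mul_mul_conjTranspose_same (A t)) (hW t),
        add_le_add_left (star_right_conjugate_le_conjugate hle (A t)) _⟩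
  refine Finset.sum_le_sum fun t _ => (hΘ t).trace_mul_mono ?_
  exact (hfiltered t (hpredicted t).1 (hpredicted t).2).2

/-- Monotonicity of the LQG sensor-selection cost in the sensor set.
The filtered covariances `Sf S t` and predicted covariances `Sp S t`
(times `t = 0, 1, …, T-1`) follow the Kalman recursion with common initial
predicted covariance `Sig10`, and `Θ t` are positive semidefinite weights. -/
theorem lqg_cost_monotone {n : ℕ} {ι : Type*} [Fintype ι] [DecidableEq ι]
    {p : ι → ℕ} (T : ℕ)
    (A W : ℕ → Matrix (Fin n) (Fin n) ℝ)
    (Sig10 : Matrix (Fin n) (Fin n) ℝ)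
    (C : ∀ i : ι, ℕ → Matrix (Fin (p i)) (Fin n) ℝ)
    (V : ∀ i : ι, ℕ → Matrix (Fin (p i)) (Fin (p i)) ℝ)
    (Θ : ℕ → Matrix (Fin n) (Fin n) ℝ)
    (Sf Sp : Finset ι → ℕ → Matrix (Fin n) (Fin n) ℝ)
    (hSig10 : Sig10.PosDef) (hW : ∀ t, (W t).PosDef)
    (hV : ∀ i t, (V i t).PosDef)
    (hΘ : ∀ t, (Θ t).PosSemidef)
    (hinit : ∀ S : Finset ι, Sp S 0 = Sig10)
    (hupd : ∀ (S : Finset ι) (t : ℕ),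
      Sf S t = ((Sp S t)⁻¹ + ∑ i ∈ S, (C i t)ᵀ * (V i t)⁻¹ * C i t)⁻¹)
    (hpred : ∀ (S : Finset ι) (t : ℕ),
      Sp S (t + 1) = A t * Sf S t * (A t)ᵀ + W t)
    (S1 S2 : Finset ι) (hsub : S1 ⊆ S2) :
    ∑ t ∈ Finset.range T, (Θ t * Sf S2 t).trace ≤
      ∑ t ∈ Finset.range T, (Θ t * Sf S1 t).trace :=
  lqg_cost_monotone_general T A W Sig10 C V Θ Sf Sp hSig10 hW hV hΘ hinit hupd hpred S1 S2 hsub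
end

section
/- Riccati identity for the control weight matrices: for every t, Θ_t = A_tᵀ·S_t·A_t + Q_{t−1} − S_{t−1}, where the quantities come from the backward LQR Riccati recursion. -/
/-!
By the Woodbury identity, `N_t = A_tᵀ S_t A_t - A_tᵀ S_t B_t M_t⁻¹ B_tᵀ S_t A_t`, and the subtracted
term is exactly `Θ_t = K_tᵀ M_t K_t` once `K_t` is substituted (using the symmetry of `S_t` and
`M_t`). Hence `Θ_t = A_tᵀ S_t A_t - N_t`, and `N_t = S_{t-1} - Q_{t-1}` by the recursion.
-/

open Matrix

namespace Matrix

theorem inv_add_mul_inv_mul_eq_sub {ι κ α : Type*} [Fintype ι] [DecidableEq ι] [Fintype κ]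
    [DecidableEq κ] [CommRing α] {S : Matrix ι ι α} {R : Matrix κ κ α}
    (B : Matrix ι κ α) (C : Matrix κ ι α) (hS : IsUnit S) (hR : IsUnit R)
    (hM : IsUnit (C * S * B + R)) :
    (S⁻¹ + B * R⁻¹ * C)⁻¹ = S - S * B * (C * S * B + R)⁻¹ * C * S := by
  have hSS : S⁻¹⁻¹ = S := nonsing_inv_nonsing_inv S ((isUnit_iff_isUnit_det S).mp hS)
  have hRR : R⁻¹⁻¹ = R := nonsing_inv_nonsing_inv R ((isUnit_iff_isUnit_det R).mp hR)
  have hM' : IsUnit (R⁻¹⁻¹ + C * S⁻¹⁻¹ * B) := by rwa [hSS, hRR, add_comm]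
  rw [add_mul_mul_inv_eq_sub _ _ _ _ (isUnit_nonsing_inv_iff.mpr hS)
    (isUnit_nonsing_inv_iff.mpr hR) hM', hSS, hRR, add_comm R]

theorem transpose_neg_inv_mul_mul_neg_inv_mul {ι κ ν α : Type*} [Fintype ι] [Fintype κ]
    [DecidableEq κ] [CommRing α] {S : Matrix ι ι α} {M : Matrix κ κ α}
    (A : Matrix ι ν α) (B : Matrix ι κ α) (hS : Sᵀ = S) (hM : Mᵀ = M) (hMu : IsUnit M) :
    (-(M⁻¹ * Bᵀ * S * A))ᵀ * M * -(M⁻¹ * Bᵀ * S * A) = Aᵀ * S * B * M⁻¹ * Bᵀ * S * A := by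
  simp only [transpose_neg, Matrix.neg_mul, Matrix.mul_neg, neg_neg, transpose_mul,
    transpose_nonsing_inv, hS, hM, transpose_transpose, Matrix.mul_assoc,
    mul_nonsing_inv_cancel_left _ _ ((isUnit_iff_isUnit_det M).mp hMu)]

theorem PosDef.transpose_mul_mul_add {ι κ : Type*} [Fintype ι] [Fintype κ]
    {S : Matrix ι ι ℝ} {R : Matrix κ κ ℝ} (hS : S.PosDef) (hR : R.PosDef) (B : Matrix ι κ ℝ) :
    (Bᵀ * S * B + R).PosDef := by
  refine PosDef.posSemidef_add ?_ hR
  simpa only [conjTranspose_eq_transpose_of_trivial] using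
    hS.posSemidef.conjTranspose_mul_mul_same B

end Matrix

theorem theta_riccati_identity_general {n m : ℕ}
    (A S N Q Θ : ℕ → Matrix (Fin n) (Fin n) ℝ)
    (B : ℕ → Matrix (Fin n) (Fin m) ℝ)
    (R M : ℕ → Matrix (Fin m) (Fin m) ℝ)
    (K : ℕ → Matrix (Fin m) (Fin n) ℝ)
    (hR : ∀ t, (R t).PosDef)
    (hSpd : ∀ t, (S t).PosDef)
    (hS : ∀ t, S t = Q t + N (t + 1))
    (hN : ∀ t, N t = (A t)ᵀ * ((S t)⁻¹ + B t * (R t)⁻¹ * (B t)ᵀ)⁻¹ * A t)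
    (hM : ∀ t, M t = (B t)ᵀ * S t * B t + R t)
    (hK : ∀ t, K t = -((M t)⁻¹ * (B t)ᵀ * S t * A t))
    (hΘ : ∀ t, Θ t = (K t)ᵀ * M t * K t) :
    ∀ t : ℕ, 1 ≤ t → Θ t = (A t)ᵀ * S t * A t + Q (t - 1) - S (t - 1) := by
  intro t ht
  have hMpd : (M t).PosDef := hM t ▸ (hSpd t).transpose_mul_mul_add (hR t) (B t)
  have hΘt : Θ t = (A t)ᵀ * S t * B t * (M t)⁻¹ * (B t)ᵀ * S t * A t := by
    rw [hΘ t, hK t]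
    exact transpose_neg_inv_mul_mul_neg_inv_mul _ _ (hSpd t).isHermitian hMpd.isHermitian
      hMpd.isUnit
  have hNt : N t = (A t)ᵀ * S t * A t - Θ t := by
    rw [hN t, inv_add_mul_inv_mul_eq_sub _ _ (hSpd t).isUnit (hR t).isUnit (hM t ▸ hMpd.isUnit),
      ← hM t, hΘt]
    simp only [Matrix.mul_sub, Matrix.sub_mul, Matrix.mul_assoc]
  rw [hS (t - 1), Nat.sub_add_cancel ht, hNt]
  abel

/-- Riccati identity `Θ_t = A_tᵀ S_t A_t + Q_{t-1} - S_{t-1}` for the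
backward LQR Riccati recursion. -/
theorem theta_riccati_identity {n m : ℕ}
    (A S N Q Θ : ℕ → Matrix (Fin n) (Fin n) ℝ)
    (B : ℕ → Matrix (Fin n) (Fin m) ℝ)
    (R M : ℕ → Matrix (Fin m) (Fin m) ℝ)
    (K : ℕ → Matrix (Fin m) (Fin n) ℝ)
    (hQ : ∀ t, (Q t).PosSemidef) (hR : ∀ t, (R t).PosDef)
    (hSpd : ∀ t, (S t).PosDef)
    (hS : ∀ t, S t = Q t + N (t + 1))
    (hN : ∀ t, N t = (A t)ᵀ * ((S t)⁻¹ + B t * (R t)⁻¹ * (B t)ᵀ)⁻¹ * A t)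
    (hM : ∀ t, M t = (B t)ᵀ * S t * B t + R t)
    (hK : ∀ t, K t = -((M t)⁻¹ * (B t)ᵀ * S t * A t))
    (hΘ : ∀ t, Θ t = (K t)ᵀ * M t * K t) :
    ∀ t : ℕ, 1 ≤ t → Θ t = (A t)ᵀ * S t * A t + Q (t - 1) - S (t - 1) :=
  theta_riccati_identity_general A S N Q Θ B R M K hR hSpd hS hN hM hK hΘ
end

section
/- One-step information gain lower bound: let Ω be positive definite, Θ positive semidefinite symmetric, and C̄ a p×n matrix. Then tr(Θ·Ω⁻¹) − tr(Θ·(Ω + C̄ᵀC̄)⁻¹) = tr(Θ·Ω⁻¹C̄ᵀ(I + C̄Ω⁻¹C̄ᵀ)⁻¹C̄Ω⁻¹) ≥ λ_max(I + C̄Ω⁻¹C̄ᵀ)⁻¹ · tr(C̄Ω⁻¹ΘΩ⁻¹C̄ᵀ) ≥ 0. -/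
/-!
By the Woodbury identity the gain equals `tr (M⁻¹ B)` with `M = 1 + C Ω⁻¹ Cᵀ` and
`B = C Ω⁻¹ Θ Ω⁻¹ Cᵀ ⪰ 0`. The eigenvalues of `M` lie in `(0, λ_max]`, so the functional calculus
gives `λ_max⁻¹ • 1 ≤ M⁻¹` in the Loewner order, and the trace of a product of two positive
semidefinite matrices is nonnegative.
-/

open Matrix

section

open scoped MatrixOrder

variable {ι : Type*} [Fintype ι] [DecidableEq ι]

theorem Matrix.PosSemidef.trace_mul_nonneg_s19 {A B : Matrix ι ι ℝ} (hA : A.PosSemidef)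
    (hB : B.PosSemidef) : 0 ≤ (A * B).trace := by
  obtain ⟨X, rfl⟩ := CStarAlgebra.nonneg_iff_eq_star_mul_self.mp hA.nonneg
  rw [Matrix.mul_assoc, trace_mul_comm, star_eq_conjTranspose]
  exact (hB.mul_mul_conjTranspose_same X).trace_nonneg

theorem Matrix.PosDef.inv_iSup_eigenvalues_le_inv {M : Matrix ι ι ℝ} (hM : M.PosDef) :
    algebraMap ℝ (Matrix ι ι ℝ) (⨆ i, hM.1.eigenvalues i)⁻¹ ≤ M⁻¹ := by
  rw [nonsing_inv_eq_ringInverse, ← cfc_ringInverse_id (R := ℝ) M hM.isUnit hM.1.isSelfAdjoint]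
  have h0 : (0 : ℝ) ∉ spectrum ℝ M := spectrum.zero_notMem ℝ hM.isUnit
  refine algebraMap_le_cfc _ _ M (fun x hx => ?_)
    (continuousOn_inv₀.mono fun x hx => ne_of_mem_of_not_mem hx h0)
  obtain ⟨i, rfl⟩ := hM.1.spectrum_real_eq_range_eigenvalues ▸ hx
  exact inv_anti₀ (hM.eigenvalues_pos i) (le_ciSup (Set.finite_range _).bddAbove i)

theorem Matrix.PosDef.inv_iSup_eigenvalues_mul_trace_le {M B : Matrix ι ι ℝ} (hM : M.PosDef)
    (hB : B.PosSemidef) :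
    (⨆ i, hM.1.eigenvalues i)⁻¹ * B.trace ≤ (M⁻¹ * B).trace := by
  have := (le_iff.mp hM.inv_iSup_eigenvalues_le_inv).trace_mul_nonneg_s19 hB
  rwa [Matrix.sub_mul, trace_sub, Algebra.algebraMap_eq_smul_one, Matrix.smul_mul, Matrix.one_mul,
    trace_smul, smul_eq_mul, sub_nonneg] at this

end

theorem Matrix.inv_add_transpose_mul_self {m n : Type*} [Fintype m] [DecidableEq m]
    [Fintype n] [DecidableEq n] {K : Type*} [Field K] (Ω : Matrix n n K) (C : Matrix m n K)
    (hΩ : IsUnit Ω) (hM : IsUnit (1 + C * Ω⁻¹ * Cᵀ)) :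
    (Ω + Cᵀ * C)⁻¹ = Ω⁻¹ - Ω⁻¹ * Cᵀ * (1 + C * Ω⁻¹ * Cᵀ)⁻¹ * C * Ω⁻¹ := by
  simpa using add_mul_mul_inv_eq_sub Ω Cᵀ 1 C hΩ isUnit_one (by rwa [inv_one])

theorem one_step_information_gain_bound_general {n p : ℕ}
    (Ω Θ : Matrix (Fin n) (Fin n) ℝ) (C : Matrix (Fin p) (Fin n) ℝ)
    (hΩ : Ω.PosDef) (hΘ : Θ.PosSemidef)
    (hM : ((1 : Matrix (Fin p) (Fin p) ℝ) + C * Ω⁻¹ * Cᵀ).IsHermitian) :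
    (Θ * Ω⁻¹).trace - (Θ * (Ω + Cᵀ * C)⁻¹).trace =
        (Θ * Ω⁻¹ * Cᵀ * ((1 : Matrix (Fin p) (Fin p) ℝ) + C * Ω⁻¹ * Cᵀ)⁻¹ * C * Ω⁻¹).trace ∧
      (Θ * Ω⁻¹ * Cᵀ * ((1 : Matrix (Fin p) (Fin p) ℝ) + C * Ω⁻¹ * Cᵀ)⁻¹ * C * Ω⁻¹).trace ≥
        (⨆ i, hM.eigenvalues i)⁻¹ * (C * Ω⁻¹ * Θ * Ω⁻¹ * Cᵀ).trace ∧
      0 ≤ (⨆ i, hM.eigenvalues i)⁻¹ * (C * Ω⁻¹ * Θ * Ω⁻¹ * Cᵀ).trace := by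
  set M := (1 : Matrix (Fin p) (Fin p) ℝ) + C * Ω⁻¹ * Cᵀ
  have hCt : Cᴴ = Cᵀ := conjTranspose_eq_transpose_of_trivial C
  have hMpd : M.PosDef :=
    PosDef.one.add_posSemidef (hCt ▸ hΩ.inv.posSemidef.mul_mul_conjTranspose_same C)
  have hB : (C * Ω⁻¹ * Θ * Ω⁻¹ * Cᵀ).PosSemidef := by
    have hCΩt : (C * Ω⁻¹)ᴴ = Ω⁻¹ * Cᵀ := by rw [conjTranspose_mul, hΩ.inv.1.eq, hCt]
    simpa only [hCΩt, Matrix.mul_assoc] using hΘ.mul_mul_conjTranspose_same (C * Ω⁻¹)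
  have hcycle :
      (Θ * Ω⁻¹ * Cᵀ * M⁻¹ * C * Ω⁻¹).trace = (M⁻¹ * (C * Ω⁻¹ * Θ * Ω⁻¹ * Cᵀ)).trace := by
    rw [show Θ * Ω⁻¹ * Cᵀ * M⁻¹ * C * Ω⁻¹ = (Θ * Ω⁻¹ * Cᵀ) * (M⁻¹ * (C * Ω⁻¹)) by
      simp only [Matrix.mul_assoc], trace_mul_comm]
    simp only [Matrix.mul_assoc]
  refine ⟨?_, ?_, ?_⟩
  · rw [inv_add_transpose_mul_self Ω C hΩ.isUnit hMpd.isUnit, Matrix.mul_sub, trace_sub,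
      sub_sub_cancel]
    simp only [Matrix.mul_assoc]
  · rw [hcycle]
    exact hMpd.inv_iSup_eigenvalues_mul_trace_le hB
  · exact mul_nonneg (inv_nonneg.mpr (Real.iSup_nonneg fun i => (hMpd.eigenvalues_pos i).le))
      hB.trace_nonneg

theorem one_step_information_gain_bound {n p : ℕ} [NeZero p]
    (Ω Θ : Matrix (Fin n) (Fin n) ℝ) (C : Matrix (Fin p) (Fin n) ℝ)
    (hΩ : Ω.PosDef) (hΘ : Θ.PosSemidef)
    (hM : ((1 : Matrix (Fin p) (Fin p) ℝ) + C * Ω⁻¹ * Cᵀ).IsHermitian) :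
    (Θ * Ω⁻¹).trace - (Θ * (Ω + Cᵀ * C)⁻¹).trace =
        (Θ * Ω⁻¹ * Cᵀ * ((1 : Matrix (Fin p) (Fin p) ℝ) + C * Ω⁻¹ * Cᵀ)⁻¹ * C * Ω⁻¹).trace ∧
      (Θ * Ω⁻¹ * Cᵀ * ((1 : Matrix (Fin p) (Fin p) ℝ) + C * Ω⁻¹ * Cᵀ)⁻¹ * C * Ω⁻¹).trace ≥
        (⨆ i, hM.eigenvalues i)⁻¹ * (C * Ω⁻¹ * Θ * Ω⁻¹ * Cᵀ).trace ∧
      0 ≤ (⨆ i, hM.eigenvalues i)⁻¹ * (C * Ω⁻¹ * Θ * Ω⁻¹ * Cᵀ).trace :=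
  one_step_information_gain_bound_general Ω Θ C hΩ hΘ hM
end
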